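/- Let γ ⊂ ℝ^d be locally finite and satisfy the density condition with constant a > 0 for interaction radius r > 0, and let {V_{xy}} be an admissible family with interaction radius r and Lipschitz constant C > 0. Fix α^* > 0. Then there exists a constant L > 0 (depending only on C, a, r, α^*) such that for all 0 < α < β ≤ α^* and all q′, q′′ : γ → ℝ with ‖q′‖_α, ‖q′′‖_α < ∞, the family (|V̄_x(q′) − V̄_x(q′′)|² e^{−β|x|})_{x∈γ} is summable and ∑_{x∈γ} |V̄_x(q′) − V̄_x(q′′)|² e^{−β|x|} ≤ L² (β − α)^{−1} ∑_{x∈γ} |q′_x − q′′_x|² e^{−α|x|}. -/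

import Mathlib

/-!
With `Δ = q' - q''`, Lipschitz continuity and Cauchy–Schwarz over the `n_x` terms of `V̄_x` give
`|V̄_x(q') - V̄_x(q'')|² ≤ 2C² (n_x² Δ_x² + n_x ∑_{y ∈ γ_{x,r}} Δ_y²)`.
The density condition gives `n_x² ≤ a² (1 + |x|)`, and the factor `1 + |x|` is absorbed by the gap
`e^{-(β - α)|x|}` at the price `(1 + α*) / (β - α)`. In the off-diagonal part, `|x|` and `|y|`
differ by less than `r`, so `n_x e^{-β|x|} ≤ a √(1 + r) e^{α* r} √(1 + |y|) e^{-β|y|}`; exchanging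
the sums over `x` and `y ∈ γ_{x,r}` (a symmetric relation), each `y` is counted `n_y ≤ a √(1 + |y|)`
times, and the same absorption applies.
-/

open scoped BigOperators

noncomputable section

/-- The finite set `γ_{x,r} = {y ∈ γ : |x - y| < r}` of points of `γ` within
distance `r` of `x`, given local finiteness of `γ`. -/
def nbhd {d : ℕ} (γ : Set (EuclideanSpace ℝ (Fin d)))
    (hLF : ∀ (x : EuclideanSpace ℝ (Fin d)) (R : ℝ), {y ∈ γ | dist x y < R}.Finite)
    (r : ℝ) (x : EuclideanSpace ℝ (Fin d)) : Finset (EuclideanSpace ℝ (Fin d)) :=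
  (hLF x r).toFinset

/-- `n_{x,r}(γ)`, the number of points of `γ` within distance `r` of `x`. -/
def npts {d : ℕ} (γ : Set (EuclideanSpace ℝ (Fin d)))
    (hLF : ∀ (x : EuclideanSpace ℝ (Fin d)) (R : ℝ), {y ∈ γ | dist x y < R}.Finite)
    (r : ℝ) (x : EuclideanSpace ℝ (Fin d)) : ℕ :=
  (nbhd γ hLF r x).card

/-- `V̄_x(q) = ∑_{y ∈ γ_{x,r}} V_{xy}(q_x, q_y)`. -/
def Vbar {d : ℕ} (γ : Set (EuclideanSpace ℝ (Fin d)))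
    (hLF : ∀ (x : EuclideanSpace ℝ (Fin d)) (R : ℝ), {y ∈ γ | dist x y < R}.Finite)
    (V : EuclideanSpace ℝ (Fin d) → EuclideanSpace ℝ (Fin d) → ℝ → ℝ → ℝ)
    (r : ℝ) (q : EuclideanSpace ℝ (Fin d) → ℝ) (x : EuclideanSpace ℝ (Fin d)) : ℝ :=
  ∑ y ∈ nbhd γ hLF r x, V x y (q x) (q y)

open Real Finset

lemma one_add_mul_exp_neg_le {α β M t : ℝ} (hαβ : α < β) (hM : β - α ≤ M) (ht : 0 ≤ t) :
    (1 + t) * exp (-β * t) ≤ (1 + M) / (β - α) * exp (-α * t) := by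
  set ε := β - α
  have hε : 0 < ε := sub_pos.2 hαβ
  have hsplit : exp (-β * t) = exp (-(ε * t)) * exp (-α * t) := by
    rw [← exp_add]; congr 1; ring
  have hexp_le_one : exp (-(ε * t)) ≤ 1 := exp_le_one_iff.2 (by nlinarith)
  have hlin : ε * t * exp (-(ε * t)) ≤ 1 := by
    rw [exp_neg, ← div_eq_mul_inv, div_le_one (exp_pos _)]
    linarith [add_one_le_exp (ε * t)]
  rw [hsplit, ← mul_assoc]
  gcongr
  rw [le_div_iff₀ hε]
  nlinarith [mul_le_mul_of_nonneg_left hexp_le_one hε.le]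

lemma sq_sum_sub_sum_le {ι : Type*} (s : Finset ι) {f g v : ι → ℝ} {C u : ℝ}
    (h : ∀ y ∈ s, |f y - g y| ≤ C * (|u| + |v y|)) :
    (∑ y ∈ s, f y - ∑ y ∈ s, g y) ^ 2
      ≤ 2 * C ^ 2 * ((#s : ℝ) ^ 2 * u ^ 2 + #s * ∑ y ∈ s, v y ^ 2) := by
  have habs : |∑ y ∈ s, f y - ∑ y ∈ s, g y| ≤ ∑ y ∈ s, C * (|u| + |v y|) := by
    rw [← sum_sub_distrib]
    exact (abs_sum_le_sum_abs _ _).trans (sum_le_sum h)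
  have hterm : ∀ y ∈ s, (C * (|u| + |v y|)) ^ 2 ≤ 2 * C ^ 2 * (u ^ 2 + v y ^ 2) := fun y _ => by
    nlinarith [sq_nonneg (C * (|u| - |v y|)), sq_abs u, sq_abs (v y)]
  calc (∑ y ∈ s, f y - ∑ y ∈ s, g y) ^ 2
      ≤ (∑ y ∈ s, C * (|u| + |v y|)) ^ 2 := sq_le_sq' (abs_le.1 habs).1 (abs_le.1 habs).2
    _ ≤ #s * ∑ y ∈ s, (C * (|u| + |v y|)) ^ 2 := sq_sum_le_card_mul_sum_sq
    _ ≤ #s * ∑ y ∈ s, 2 * C ^ 2 * (u ^ 2 + v y ^ 2) := by gcongr with y hy; exact hterm y hy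
    _ = 2 * C ^ 2 * ((#s : ℝ) ^ 2 * u ^ 2 + #s * ∑ y ∈ s, v y ^ 2) := by
      simp only [mul_add, sum_add_distrib, sum_const, nsmul_eq_mul, ← mul_sum]
      ring

lemma hasSum_sum_finset_of_symm {ι : Type*} (s : ι → Finset ι) (hs : ∀ x y, y ∈ s x ↔ x ∈ s y)
    {c : ι → ℝ} (hc : ∀ y, 0 ≤ c y) (h : Summable fun y => (#(s y) : ℝ) * c y) :
    HasSum (fun x => ∑ y ∈ s x, c y) (∑' y, (#(s y) : ℝ) * c y) := by
  classical
  set g : ι × ι → ℝ := fun p => if p.2 ∈ s p.1 then c p.1 else 0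
  have hg_row : ∀ y, HasSum (fun x => g (y, x)) (#(s y) * c y) := fun y => by
    have := hasSum_sum_of_ne_finset_zero (L := .unconditional ι) (s := s y)
      (f := fun x => g (y, x)) fun x hx => by simp [g, hx]
    simpa [g] using this
  have hg : Summable g :=
    (summable_prod_of_nonneg fun p => ite_nonneg (hc _) le_rfl).2
      ⟨fun y => (hg_row y).summable, (summable_congr fun y => (hg_row y).tsum_eq).2 h⟩
  have hg_col : ∀ x, HasSum (fun y => g (y, x)) (∑ y ∈ s x, c y) := fun x => by
    have := hasSum_sum_of_ne_finset_zero (L := .unconditional ι) (s := s x)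
      (f := fun y => g (y, x)) fun y hy => by simp [g, ← hs, hy]
    convert this using 1
    exact sum_congr rfl fun y hy => by simp [g, (hs x y).1 hy]
  have hswap : HasSum (g ∘ Equiv.prodComm ι ι) (∑' y, (#(s y) : ℝ) * c y) := by
    rw [Equiv.hasSum_iff, (hg.hasSum.prod_fiberwise hg_row).tsum_eq]
    exact hg.hasSum
  exact hswap.prod_fiberwise hg_col

lemma Summable.sub_sq_mul {ι : Type*} {f g w : ι → ℝ} (hw : ∀ i, 0 ≤ w i)
    (hf : Summable fun i => f i ^ 2 * w i) (hg : Summable fun i => g i ^ 2 * w i) :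
    Summable fun i => (f i - g i) ^ 2 * w i :=
  ((hf.mul_left 2).add (hg.mul_left 2)).of_nonneg_of_le
    (fun i => mul_nonneg (sq_nonneg _) (hw i)) fun i => by
      nlinarith [mul_nonneg (sq_nonneg (f i + g i)) (hw i)]

lemma summable_and_tsum_le_of_le_add {ι : Type*} {f u v : ι → ℝ} (hf : ∀ i, 0 ≤ f i)
    (hle : ∀ i, f i ≤ u i + v i) (hu : Summable u) (hv : Summable v) :
    Summable f ∧ ∑' i, f i ≤ ∑' i, u i + ∑' i, v i := by
  have hf_sum : Summable f := (hu.add hv).of_nonneg_of_le hf hle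
  exact ⟨hf_sum, (hf_sum.tsum_le_tsum hle (hu.add hv)).trans_eq (hu.tsum_add hv)⟩

section PointConfiguration

variable {d : ℕ} (γ : Set (EuclideanSpace ℝ (Fin d)))
  (hLF : ∀ (x : EuclideanSpace ℝ (Fin d)) (R : ℝ), {y ∈ γ | dist x y < R}.Finite) (r : ℝ)

open scoped Classical in
def nbhdSubtype (x : EuclideanSpace ℝ (Fin d)) : Finset γ :=
  (nbhd γ hLF r x).subtype (· ∈ γ)

variable {γ hLF r}

lemma mem_nbhd {x y : EuclideanSpace ℝ (Fin d)} : y ∈ nbhd γ hLF r x ↔ y ∈ γ ∧ dist x y < r := by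
  simp [nbhd]

lemma mem_nbhdSubtype {x : EuclideanSpace ℝ (Fin d)} {y : γ} :
    y ∈ nbhdSubtype γ hLF r x ↔ dist x y < r := by
  simp [nbhdSubtype, mem_nbhd]

lemma sum_nbhdSubtype (x : EuclideanSpace ℝ (Fin d)) (f : EuclideanSpace ℝ (Fin d) → ℝ) :
    ∑ y ∈ nbhdSubtype γ hLF r x, f y = ∑ y ∈ nbhd γ hLF r x, f y := by
  classical
  exact sum_subtype_of_mem f fun _ hy => (mem_nbhd.1 hy).1

lemma card_nbhdSubtype (x : EuclideanSpace ℝ (Fin d)) :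
    #(nbhdSubtype γ hLF r x) = npts γ hLF r x := by
  simpa [npts] using sum_nbhdSubtype (γ := γ) (hLF := hLF) (r := r) x fun _ => 1

lemma npts_sq_le {a : ℝ} (hdens : ∀ x, (npts γ hLF r x : ℝ) ≤ a * √(1 + ‖x‖))
    (x : EuclideanSpace ℝ (Fin d)) : (npts γ hLF r x : ℝ) ^ 2 ≤ a ^ 2 * (1 + ‖x‖) :=
  calc (npts γ hLF r x : ℝ) ^ 2 ≤ (a * √(1 + ‖x‖)) ^ 2 :=
        pow_le_pow_left₀ (Nat.cast_nonneg _) (hdens x) 2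
    _ = a ^ 2 * (1 + ‖x‖) := by rw [mul_pow, sq_sqrt (by positivity)]

lemma npts_mul_sqrt_le {a : ℝ} (hdens : ∀ x, (npts γ hLF r x : ℝ) ≤ a * √(1 + ‖x‖))
    (x : EuclideanSpace ℝ (Fin d)) : npts γ hLF r x * √(1 + ‖x‖) ≤ a * (1 + ‖x‖) :=
  calc npts γ hLF r x * √(1 + ‖x‖) ≤ a * √(1 + ‖x‖) * √(1 + ‖x‖) := by gcongr; exact hdens x
    _ = a * (1 + ‖x‖) := by rw [mul_assoc, mul_self_sqrt (by positivity)]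

lemma npts_mul_exp_le_of_dist_lt {a β M : ℝ}
    (hdens : ∀ x, (npts γ hLF r x : ℝ) ≤ a * √(1 + ‖x‖)) (ha : 0 ≤ a) (hβ : 0 ≤ β)
    (hβM : β ≤ M) {x y : EuclideanSpace ℝ (Fin d)} (hxy : dist x y < r) :
    npts γ hLF r x * exp (-β * ‖x‖)
      ≤ a * √(1 + r) * exp (M * r) * (√(1 + ‖y‖) * exp (-β * ‖y‖)) := by
  have hr : 0 < r := dist_nonneg.trans_lt hxy
  have hnorm : |‖x‖ - ‖y‖| < r := (abs_norm_sub_norm_le x y).trans_lt (dist_eq_norm x y ▸ hxy)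
  obtain ⟨hy_lt, hx_lt⟩ := abs_lt.1 hnorm
  have hsqrt : √(1 + ‖x‖) ≤ √(1 + r) * √(1 + ‖y‖) := by
    rw [← sqrt_mul (by linarith)]
    exact sqrt_le_sqrt (by nlinarith [norm_nonneg y])
  have hexp : exp (-β * ‖x‖) ≤ exp (M * r) * exp (-β * ‖y‖) := by
    rw [← exp_add]
    exact exp_le_exp.2 (by nlinarith [mul_le_mul_of_nonneg_left hy_lt.le hβ,
      mul_le_mul_of_nonneg_right hβM hr.le])
  calc npts γ hLF r x * exp (-β * ‖x‖)
      ≤ a * (√(1 + r) * √(1 + ‖y‖)) * (exp (M * r) * exp (-β * ‖y‖)) := by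
        gcongr
        exact (hdens x).trans (by gcongr)
    _ = a * √(1 + r) * exp (M * r) * (√(1 + ‖y‖) * exp (-β * ‖y‖)) := by ring

lemma sq_Vbar_sub_le {V : EuclideanSpace ℝ (Fin d) → EuclideanSpace ℝ (Fin d) → ℝ → ℝ → ℝ} {C : ℝ}
    (hVlip : ∀ x ∈ γ, ∀ y ∈ γ, ∀ q1 q2 q1' q2' : ℝ,
      |V x y q1 q2 - V x y q1' q2'| ≤ C * (|q1 - q1'| + |q2 - q2'|))
    {x : EuclideanSpace ℝ (Fin d)} (hx : x ∈ γ) (q' q'' : EuclideanSpace ℝ (Fin d) → ℝ) :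
    (Vbar γ hLF V r q' x - Vbar γ hLF V r q'' x) ^ 2
      ≤ 2 * C ^ 2 * ((npts γ hLF r x : ℝ) ^ 2 * (q' x - q'' x) ^ 2
        + npts γ hLF r x * ∑ y ∈ nbhd γ hLF r x, (q' y - q'' y) ^ 2) :=
  sq_sum_sub_sum_le _ fun y hy => hVlip x hx y (mem_nbhd.1 hy).1 _ _ _ _

lemma sq_Vbar_sub_mul_exp_le {V : EuclideanSpace ℝ (Fin d) → EuclideanSpace ℝ (Fin d) → ℝ → ℝ → ℝ}
    {C a α β M : ℝ} (hdens : ∀ x, (npts γ hLF r x : ℝ) ≤ a * √(1 + ‖x‖)) (ha : 0 ≤ a)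
    (hVlip : ∀ x ∈ γ, ∀ y ∈ γ, ∀ q1 q2 q1' q2' : ℝ,
      |V x y q1 q2 - V x y q1' q2'| ≤ C * (|q1 - q1'| + |q2 - q2'|))
    (hα : 0 ≤ α) (hαβ : α < β) (hβM : β ≤ M)
    {x : EuclideanSpace ℝ (Fin d)} (hx : x ∈ γ) (q' q'' : EuclideanSpace ℝ (Fin d) → ℝ) :
    (Vbar γ hLF V r q' x - Vbar γ hLF V r q'' x) ^ 2 * exp (-β * ‖x‖)
      ≤ 2 * C ^ 2 * a ^ 2 * (1 + M) / (β - α) * ((q' x - q'' x) ^ 2 * exp (-α * ‖x‖))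
        + 2 * C ^ 2 * (a * √(1 + r) * exp (M * r)) *
          ∑ y ∈ nbhdSubtype γ hLF r x, √(1 + ‖(y : EuclideanSpace ℝ (Fin d))‖) *
            exp (-β * ‖(y : EuclideanSpace ℝ (Fin d))‖) * (q' y - q'' y) ^ 2 := by
  set n : ℝ := (npts γ hLF r x : ℝ)
  have hdiag : n ^ 2 * exp (-β * ‖x‖) ≤ a ^ 2 * ((1 + M) / (β - α) * exp (-α * ‖x‖)) :=
    calc n ^ 2 * exp (-β * ‖x‖) ≤ a ^ 2 * (1 + ‖x‖) * exp (-β * ‖x‖) :=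
          mul_le_mul_of_nonneg_right (npts_sq_le hdens x) (exp_pos _).le
      _ ≤ a ^ 2 * ((1 + M) / (β - α) * exp (-α * ‖x‖)) := by
          rw [mul_assoc]
          exact mul_le_mul_of_nonneg_left
            (one_add_mul_exp_neg_le hαβ (by linarith) (norm_nonneg x)) (sq_nonneg a)
  have hoff : ∀ y ∈ nbhd γ hLF r x, n * exp (-β * ‖x‖)
      ≤ a * √(1 + r) * exp (M * r) * (√(1 + ‖y‖) * exp (-β * ‖y‖)) := fun y hy =>
    npts_mul_exp_le_of_dist_lt hdens ha (by linarith) hβM (mem_nbhd.1 hy).2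
  have hsum : n * (∑ y ∈ nbhd γ hLF r x, (q' y - q'' y) ^ 2) * exp (-β * ‖x‖)
      = ∑ y ∈ nbhd γ hLF r x, n * exp (-β * ‖x‖) * (q' y - q'' y) ^ 2 := by
    rw [mul_sum, sum_mul]
    exact sum_congr rfl fun _ _ => by ring
  rw [sum_nbhdSubtype x fun y => √(1 + ‖y‖) * exp (-β * ‖y‖) * (q' y - q'' y) ^ 2]
  calc (Vbar γ hLF V r q' x - Vbar γ hLF V r q'' x) ^ 2 * exp (-β * ‖x‖)
      ≤ 2 * C ^ 2 * (n ^ 2 * (q' x - q'' x) ^ 2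
          + n * ∑ y ∈ nbhd γ hLF r x, (q' y - q'' y) ^ 2) * exp (-β * ‖x‖) :=
        mul_le_mul_of_nonneg_right (sq_Vbar_sub_le hVlip hx q' q'') (exp_pos _).le
    _ = 2 * C ^ 2 * (n ^ 2 * exp (-β * ‖x‖)) * (q' x - q'' x) ^ 2
          + ∑ y ∈ nbhd γ hLF r x, 2 * C ^ 2 * (n * exp (-β * ‖x‖) * (q' y - q'' y) ^ 2) := by
        rw [← mul_sum, ← hsum]; ring
    _ ≤ 2 * C ^ 2 * (a ^ 2 * ((1 + M) / (β - α) * exp (-α * ‖x‖))) * (q' x - q'' x) ^ 2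
          + ∑ y ∈ nbhd γ hLF r x, 2 * C ^ 2 * (a * √(1 + r) * exp (M * r) *
              (√(1 + ‖y‖) * exp (-β * ‖y‖)) * (q' y - q'' y) ^ 2) := by
        refine add_le_add ?_ (sum_le_sum fun y hy => ?_)
        · exact mul_le_mul_of_nonneg_right
            (mul_le_mul_of_nonneg_left hdiag (by positivity)) (sq_nonneg _)
        · exact mul_le_mul_of_nonneg_left
            (mul_le_mul_of_nonneg_right (hoff y hy) (sq_nonneg _)) (by positivity)
    _ = _ := by
        rw [mul_sum]
        congr 1
        · ring
        · exact sum_congr rfl fun _ _ => by ring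

lemma summable_sum_nbhdSubtype_and_tsum_le {a α β M : ℝ}
    (hdens : ∀ x, (npts γ hLF r x : ℝ) ≤ a * √(1 + ‖x‖)) (ha : 0 ≤ a)
    (hαβ : α < β) (hM : β - α ≤ M) {f : EuclideanSpace ℝ (Fin d) → ℝ} (hf : ∀ y, 0 ≤ f y)
    (hsum : Summable fun y : γ => f y * exp (-α * ‖(y : EuclideanSpace ℝ (Fin d))‖)) :
    let F := fun x : γ => ∑ y ∈ nbhdSubtype γ hLF r x,
      √(1 + ‖(y : EuclideanSpace ℝ (Fin d))‖) * exp (-β * ‖(y : EuclideanSpace ℝ (Fin d))‖) * f y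
    Summable F ∧ ∑' x, F x
      ≤ a * (1 + M) / (β - α) * ∑' y : γ, f y * exp (-α * ‖(y : EuclideanSpace ℝ (Fin d))‖) := by
  intro F
  set c : γ → ℝ := fun y => √(1 + ‖(y : EuclideanSpace ℝ (Fin d))‖) *
    exp (-β * ‖(y : EuclideanSpace ℝ (Fin d))‖) * f y
  have hc : ∀ y, 0 ≤ c y := fun y => mul_nonneg (by positivity) (hf y)
  have hle : ∀ y : γ, (#(nbhdSubtype γ hLF r y) : ℝ) * c y
      ≤ a * (1 + M) / (β - α) * (f y * exp (-α * ‖(y : EuclideanSpace ℝ (Fin d))‖)) := fun y =>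
    calc (#(nbhdSubtype γ hLF r y) : ℝ) * c y
        = npts γ hLF r y * √(1 + ‖(y : EuclideanSpace ℝ (Fin d))‖) *
            exp (-β * ‖(y : EuclideanSpace ℝ (Fin d))‖) * f y := by
          rw [card_nbhdSubtype]; ring
      _ ≤ a * (1 + ‖(y : EuclideanSpace ℝ (Fin d))‖) *
            exp (-β * ‖(y : EuclideanSpace ℝ (Fin d))‖) * f y :=
          mul_le_mul_of_nonneg_right (mul_le_mul_of_nonneg_right
            (npts_mul_sqrt_le hdens y) (exp_pos _).le) (hf y)
      _ ≤ a * ((1 + M) / (β - α) * exp (-α * ‖(y : EuclideanSpace ℝ (Fin d))‖)) * f y := by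
          rw [mul_assoc a]
          exact mul_le_mul_of_nonneg_right (mul_le_mul_of_nonneg_left
            (one_add_mul_exp_neg_le hαβ hM (norm_nonneg _)) ha) (hf y)
      _ = _ := by ring
  have hcard : Summable fun y : γ => (#(nbhdSubtype γ hLF r y) : ℝ) * c y :=
    (hsum.mul_left _).of_nonneg_of_le (fun y => mul_nonneg (Nat.cast_nonneg _) (hc y)) hle
  have hsymm : ∀ x y : γ, y ∈ nbhdSubtype γ hLF r x ↔ x ∈ nbhdSubtype γ hLF r y := by
    simp [mem_nbhdSubtype, dist_comm]
  have hF := hasSum_sum_finset_of_symm (fun x : γ => nbhdSubtype γ hLF r x) hsymm hc hcard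
  refine ⟨hF.summable, hF.tsum_eq.le.trans ?_⟩
  rw [← tsum_mul_left]
  exact hcard.tsum_le_tsum hle (hsum.mul_left _)

end PointConfiguration

theorem statement1_general (C a r αS : ℝ) (hC : 0 < C) (ha : 0 < a) (hαS : 0 < αS) :
    ∃ L > (0 : ℝ), ∀ (d : ℕ), 1 ≤ d → ∀ (γ : Set (EuclideanSpace ℝ (Fin d))),
      γ.Countable →
      ∀ (hLF : ∀ (x : EuclideanSpace ℝ (Fin d)) (R : ℝ), {y ∈ γ | dist x y < R}.Finite),
      (∀ x : EuclideanSpace ℝ (Fin d), (npts γ hLF r x : ℝ) ≤ a * Real.sqrt (1 + ‖x‖)) →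
      ∀ (V : EuclideanSpace ℝ (Fin d) → EuclideanSpace ℝ (Fin d) → ℝ → ℝ → ℝ),
      (∀ x ∈ γ, ∀ y ∈ γ, r ≤ dist x y → ∀ s t : ℝ, V x y s t = 0) →
      (∀ x ∈ γ, ∀ y ∈ γ, ∀ q1 q2 q1' q2' : ℝ,
        |V x y q1 q2 - V x y q1' q2'| ≤ C * (|q1 - q1'| + |q2 - q2'|)) →
      ∀ α β : ℝ, 0 < α → α < β → β ≤ αS →
      ∀ q' q'' : EuclideanSpace ℝ (Fin d) → ℝ,
      Summable (fun y : γ => (q' y) ^ 2 * Real.exp (-α * ‖(y : EuclideanSpace ℝ (Fin d))‖)) →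
      Summable (fun y : γ => (q'' y) ^ 2 * Real.exp (-α * ‖(y : EuclideanSpace ℝ (Fin d))‖)) →
      Summable (fun x : γ => (Vbar γ hLF V r q' x - Vbar γ hLF V r q'' x) ^ 2 *
          Real.exp (-β * ‖(x : EuclideanSpace ℝ (Fin d))‖)) ∧
      ∑' x : γ, (Vbar γ hLF V r q' x - Vbar γ hLF V r q'' x) ^ 2 *
          Real.exp (-β * ‖(x : EuclideanSpace ℝ (Fin d))‖)
        ≤ L ^ 2 * (β - α)⁻¹ *
          ∑' x : γ, (q' x - q'' x) ^ 2 * Real.exp (-α * ‖(x : EuclideanSpace ℝ (Fin d))‖) := by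
  refine ⟨√(2 * C ^ 2 * a ^ 2 * (1 + αS) * (1 + √(1 + r) * exp (αS * r))), by positivity, ?_⟩
  intro d _ γ _ hLF hdens V _ hVlip α β hα hαβ hβ q' q'' hq' hq''
  have hdiff := Summable.sub_sq_mul (fun y : γ => (exp_pos _).le) hq' hq''
  obtain ⟨hnbhd, hnbhd_le⟩ := summable_sum_nbhdSubtype_and_tsum_le (M := αS) hdens ha.le hαβ
    (by linarith) (fun y => sq_nonneg (q' y - q'' y)) hdiff
  obtain ⟨hsum, hle⟩ := summable_and_tsum_le_of_le_add (fun x => by positivity)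
    (fun x => sq_Vbar_sub_mul_exp_le hdens ha.le hVlip hα.le hαβ hβ x.2 q' q'')
    (hdiff.mul_left _) (hnbhd.mul_left _)
  refine ⟨hsum, hle.trans ?_⟩
  rw [tsum_mul_left, tsum_mul_left, sq_sqrt (by positivity)]
  calc _ ≤ 2 * C ^ 2 * a ^ 2 * (1 + αS) / (β - α) *
        ∑' x : γ, (q' x - q'' x) ^ 2 * exp (-α * ‖(x : EuclideanSpace ℝ (Fin d))‖)
      + 2 * C ^ 2 * (a * √(1 + r) * exp (αS * r)) * (a * (1 + αS) / (β - α) *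
        ∑' x : γ, (q' x - q'' x) ^ 2 * exp (-α * ‖(x : EuclideanSpace ℝ (Fin d))‖)) := by
        gcongr
    _ = _ := by ring

theorem statement1 (C a r αS : ℝ) (hC : 0 < C) (ha : 0 < a) (hr : 0 < r) (hαS : 0 < αS) :
    ∃ L > (0 : ℝ), ∀ (d : ℕ), 1 ≤ d → ∀ (γ : Set (EuclideanSpace ℝ (Fin d))),
      γ.Countable →
      ∀ (hLF : ∀ (x : EuclideanSpace ℝ (Fin d)) (R : ℝ), {y ∈ γ | dist x y < R}.Finite),
      (∀ x : EuclideanSpace ℝ (Fin d), (npts γ hLF r x : ℝ) ≤ a * Real.sqrt (1 + ‖x‖)) →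
      ∀ (V : EuclideanSpace ℝ (Fin d) → EuclideanSpace ℝ (Fin d) → ℝ → ℝ → ℝ),
      (∀ x ∈ γ, ∀ y ∈ γ, r ≤ dist x y → ∀ s t : ℝ, V x y s t = 0) →
      (∀ x ∈ γ, ∀ y ∈ γ, ∀ q1 q2 q1' q2' : ℝ,
        |V x y q1 q2 - V x y q1' q2'| ≤ C * (|q1 - q1'| + |q2 - q2'|)) →
      ∀ α β : ℝ, 0 < α → α < β → β ≤ αS →
      ∀ q' q'' : EuclideanSpace ℝ (Fin d) → ℝ,
      Summable (fun y : γ => (q' y) ^ 2 * Real.exp (-α * ‖(y : EuclideanSpace ℝ (Fin d))‖)) →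
      Summable (fun y : γ => (q'' y) ^ 2 * Real.exp (-α * ‖(y : EuclideanSpace ℝ (Fin d))‖)) →
      Summable (fun x : γ => (Vbar γ hLF V r q' x - Vbar γ hLF V r q'' x) ^ 2 *
          Real.exp (-β * ‖(x : EuclideanSpace ℝ (Fin d))‖)) ∧
      ∑' x : γ, (Vbar γ hLF V r q' x - Vbar γ hLF V r q'' x) ^ 2 *
          Real.exp (-β * ‖(x : EuclideanSpace ℝ (Fin d))‖)
        ≤ L ^ 2 * (β - α)⁻¹ *
          ∑' x : γ, (q' x - q'' x) ^ 2 * Real.exp (-α * ‖(x : EuclideanSpace ℝ (Fin d))‖) :=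
  statement1_general C a r αS hC ha hαS
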